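/- Let n ∈ ℕ and let Q₀ be a quadratic form on ℚ^n that takes integer values on ℤ^n. Let μ₀ ∈ ℚ^n be such that the polar bilinear form B of Q₀ satisfies B(μ₀,λ) ∈ ℤ for all λ ∈ ℤ^n, and let m ∈ ℚ with m − Q₀(μ₀) ∈ ℤ. For a prime p and ν ∈ ℕ, let N be the number of tuples (λ, x₁, y₁, x₂, y₂), where λ ∈ ℤ^n has all coordinates in {0,…,p^ν−1} and x₁, y₁, x₂, y₂ ∈ {0,…,p^ν−1}, such that Q₀(λ+μ₀) + x₁·y₁ + x₂·y₂ − m is an integer divisible by p^ν. Then (1 − p^{−2})·p^{(n+3)ν} ≤ N ≤ (1 + p^{−1})·p^{(n+3)ν}. -/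

import Mathlib

/-!
Let `R` be a finite commutative ring, `b` the number of its non-units and
`G(c) = #{(x, y) ∈ R² × R² | x₁y₁ + x₂y₂ = c}`. If `x₁` or `x₂` is a unit, then `y ↦ x₁y₁ + x₂y₂`
is onto with fibres of size `|R|`; the `|R|² - b²` such `x` already give
`G(c) ≥ |R|³ (1 - (b/|R|)²)`.

Suppose moreover that the non-units are exactly the multiples of some `π` (for `ℤ/p^ν`, `π = p`),
and let `κ` be the number of solutions of `πa = 0`, so that `κ b = |R|`. Writing `xᵢ = π aᵢ`,
each solution with both `xᵢ` non-units comes from exactly `κ²` pairs `(a, y)` with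
`π (a₁y₁ + a₂y₂) = c`, and these are spread over at most `κ` values `w` with `πw = c`, each
contributing `G(w)`. Hence `max G ≤ |R| (|R|² - b²) + max G / κ`, that is
`max G ≤ |R|³ (1 + b/|R|)`. For `R = ℤ/p^ν` one has `b/|R| = 1/p`.

The lattice count is the sum over `λ` of `G(c_λ)` in `ℤ/p^ν`, with `c_λ = m - Q₀(λ + μ₀)`, which
is an integer because `Q₀(λ + μ₀) = Q₀(λ) + Q₀(μ₀) + B(μ₀, λ)`.
-/

open Finset

section MulLeftFibers

variable {R : Type*} [CommRing R] [Fintype R] [DecidableEq R]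

theorem card_filter_mul_left_eq (π a₀ : R) :
    #{a : R | π * a = π * a₀} = #{a : R | π * a = 0} :=
  card_nbij' (· - a₀) (· + a₀) (fun a ha => by simp_all [mul_sub])
    (fun a ha => by simp_all [mul_add]) (fun a _ => by simp) (fun a _ => by simp)

theorem card_filter_mul_left_le (π c : R) :
    #{w : R | π * w = c} ≤ #{a : R | π * a = 0} := by
  by_cases hc : π ∣ c
  · obtain ⟨a₀, rfl⟩ := hc
    exact (card_filter_mul_left_eq π a₀).le
  · rw [filter_false_of_mem fun w _ hw => hc ⟨w, hw.symm⟩, card_empty]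
    exact Nat.zero_le _

theorem sum_comp_mul_left {M : Type*} [AddCommMonoid M] (π : R) (h : R → M) :
    ∑ a, h (π * a) = #{a : R | π * a = 0} • ∑ x with π ∣ x, h x := by
  have himage : univ.image (π * ·) = ({x | π ∣ x} : Finset R) := by
    ext x
    simp [Dvd.dvd, eq_comm]
  rw [sum_comp, himage, smul_sum]
  refine sum_congr rfl fun x hx => ?_
  obtain ⟨a₀, rfl⟩ := (mem_filter.mp hx).2
  rw [card_filter_mul_left_eq]

theorem sum_comp_mul_left_prod {M : Type*} [AddCommMonoid M] (π : R) (h : R × R → M) :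
    ∑ a : R × R, h (π * a.1, π * a.2) =
      (#{a : R | π * a = 0} * #{a : R | π * a = 0}) • ∑ x with π ∣ x.1 ∧ π ∣ x.2, h x := by
  rw [← univ_product_univ, filter_product, sum_product, sum_product, mul_smul, smul_sum]
  have inner (x : R) : #{a : R | π * a = 0} • ∑ y with π ∣ y, h (x, y) = ∑ y, h (x, π * y) :=
    (sum_comp_mul_left π _).symm
  simp_rw [inner]
  exact sum_comp_mul_left π fun x => ∑ y, h (x, π * y)

theorem card_filter_mul_left_mul_card_dvd (π : R) :
    #{a : R | π * a = 0} * #{x : R | π ∣ x} = Fintype.card R := by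
  have h := sum_comp_mul_left π fun _ => 1
  rw [← card_eq_sum_ones, ← card_eq_sum_ones, card_univ, smul_eq_mul] at h
  exact h.symm

end MulLeftFibers

section HyperbolicCount

variable {R : Type*} [CommRing R] [Fintype R] [DecidableEq R]

def hyperbolicFiberCount (x : R × R) (c : R) : ℕ :=
  #{y : R × R | x.1 * y.1 + x.2 * y.2 = c}

def hyperbolicRepCount (c : R) : ℕ :=
  #{z : (R × R) × (R × R) | z.1.1 * z.2.1 + z.1.2 * z.2.2 = c}

theorem hyperbolicRepCount_eq_sum (c : R) :
    hyperbolicRepCount c = ∑ x, hyperbolicFiberCount x c := by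
  simp only [hyperbolicRepCount, hyperbolicFiberCount, card_filter, Fintype.sum_prod_type]

theorem hyperbolicFiberCount_of_isUnit_fst {x : R × R} (hx : IsUnit x.1) (c : R) :
    hyperbolicFiberCount x c = Fintype.card R := by
  obtain ⟨u, hu⟩ := hx
  rw [hyperbolicFiberCount, ← card_univ]
  refine card_nbij' Prod.snd (fun t => (↑u⁻¹ * (c - x.2 * t), t)) (fun _ _ => mem_univ _)
    (fun t _ => ?_) (fun y hy => ?_) (fun _ _ => rfl)
  · simp [← hu, ← mul_assoc]
  · have hy : x.1 * y.1 + x.2 * y.2 = c := (mem_filter.mp hy).2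
    simp only [← hy, ← hu, add_sub_cancel_right, ← mul_assoc, Units.inv_mul, one_mul]

theorem hyperbolicFiberCount_swap (x : R × R) (c : R) :
    hyperbolicFiberCount x.swap c = hyperbolicFiberCount x c :=
  card_nbij' Prod.swap Prod.swap (fun y hy => by simp_all [add_comm])
    (fun y hy => by simp_all [add_comm]) (fun _ _ => rfl) (fun _ _ => rfl)

theorem hyperbolicFiberCount_of_isUnit {x : R × R} (hx : IsUnit x.1 ∨ IsUnit x.2) (c : R) :
    hyperbolicFiberCount x c = Fintype.card R := by
  rcases hx with hx | hx
  · exact hyperbolicFiberCount_of_isUnit_fst hx c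
  · rw [← hyperbolicFiberCount_swap, hyperbolicFiberCount_of_isUnit_fst hx]

theorem hyperbolicRepCount_eq_card_mul_add (c : R) :
    hyperbolicRepCount c = Fintype.card R * #{x : R × R | IsUnit x.1 ∨ IsUnit x.2}
      + ∑ x with ¬IsUnit x.1 ∧ ¬IsUnit x.2, hyperbolicFiberCount x c := by
  rw [hyperbolicRepCount_eq_sum, ← sum_filter_add_sum_filter_not univ
    (fun x : R × R => IsUnit x.1 ∨ IsUnit x.2)]
  simp_rw [not_or]
  rw [sum_congr rfl fun x hx => hyperbolicFiberCount_of_isUnit (mem_filter.mp hx).2 c,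
    sum_const, smul_eq_mul, mul_comm]

theorem card_isUnit_or_add_sq :
    #{x : R × R | IsUnit x.1 ∨ IsUnit x.2} + #{x : R | ¬IsUnit x} ^ 2 = Fintype.card R ^ 2 := by
  rw [sq, ← card_product, ← filter_product, univ_product_univ, ← card_univ, sq,
    ← card_product, univ_product_univ]
  simp_rw [← not_or]
  exact card_filter_add_card_filter_not _

theorem one_sub_sq_mul_le_hyperbolicRepCount (c : R) :
    (1 - ((#{x : R | ¬IsUnit x} : ℚ) / Fintype.card R) ^ 2) * (Fintype.card R : ℚ) ^ 3 ≤
      hyperbolicRepCount c := by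
  have ha : (Fintype.card R : ℚ) ≠ 0 := by exact_mod_cast Fintype.card_ne_zero
  have hU : (#{x : R × R | IsUnit x.1 ∨ IsUnit x.2} : ℚ) =
      (Fintype.card R : ℚ) ^ 2 - (#{x : R | ¬IsUnit x} : ℚ) ^ 2 := by
    rw [eq_sub_iff_add_eq]
    exact_mod_cast card_isUnit_or_add_sq
  have hle : ((Fintype.card R * #{x : R × R | IsUnit x.1 ∨ IsUnit x.2} : ℕ) : ℚ) ≤
      hyperbolicRepCount c := by
    rw [hyperbolicRepCount_eq_card_mul_add]
    exact_mod_cast Nat.le_add_right _ _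
  push_cast [hU] at hle
  convert hle using 1
  field_simp

theorem card_ann_mul_sum_fiber_not_isUnit_le (π : R) (hπ : ∀ x, ¬IsUnit x ↔ π ∣ x) (c : R)
    {B : ℕ} (hB : ∀ w : R, hyperbolicRepCount w ≤ B) :
    #{a : R | π * a = 0} * ∑ x with ¬IsUnit x.1 ∧ ¬IsUnit x.2, hyperbolicFiberCount x c ≤ B := by
  set κ := #{a : R | π * a = 0}
  have hκ : 0 < κ := card_pos.mpr ⟨0, by simp⟩
  refine Nat.le_of_mul_le_mul_left ?_ hκ
  calc κ * (κ * ∑ x with ¬IsUnit x.1 ∧ ¬IsUnit x.2, hyperbolicFiberCount x c)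
      = ∑ a : R × R, hyperbolicFiberCount (π * a.1, π * a.2) c := by
        simp_rw [hπ]
        rw [sum_comp_mul_left_prod π fun x => hyperbolicFiberCount x c, smul_eq_mul, mul_assoc]
    _ = #{z : (R × R) × (R × R) | π * (z.1.1 * z.2.1 + z.1.2 * z.2.2) = c} := by
        simp only [hyperbolicFiberCount, card_filter, Fintype.sum_prod_type, mul_add, mul_assoc]
    _ = ∑ w with π * w = c, hyperbolicRepCount w := by
        rw [card_eq_sum_card_fiberwise
          (f := fun z : (R × R) × (R × R) => z.1.1 * z.2.1 + z.1.2 * z.2.2)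
          (t := {w | π * w = c}) fun z hz => by simpa using hz]
        refine sum_congr rfl fun w hw => ?_
        rw [filter_filter, hyperbolicRepCount]
        refine congrArg card (filter_congr fun z _ => ?_)
        rw [and_iff_right_iff_imp]
        rintro rfl
        exact (mem_filter.mp hw).2
    _ ≤ #{w : R | π * w = c} * B := by
        simpa using sum_le_card_nsmul _ _ B fun w _ => hB w
    _ ≤ κ * B := Nat.mul_le_mul_right _ (card_filter_mul_left_le π c)

theorem hyperbolicRepCount_le_one_add_mul (π : R) (hπ : ∀ x, ¬IsUnit x ↔ π ∣ x) (c : R) :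
    (hyperbolicRepCount c : ℚ) ≤
      (1 + (#{x : R | ¬IsUnit x} : ℚ) / Fintype.card R) * (Fintype.card R : ℚ) ^ 3 := by
  obtain ⟨c₀, hc₀⟩ := Finite.exists_max (hyperbolicRepCount (R := R))
  set a := Fintype.card R
  set b := #{x : R | ¬IsUnit x}
  set κ := #{a : R | π * a = 0}
  have hκb : κ * b = a := by
    simp_rw [b, hπ]
    exact card_filter_mul_left_mul_card_dvd π
  have hba : b < a := card_lt_card (filter_ssubset.mpr ⟨1, mem_univ _, by simp⟩)
  have hκ : 1 < κ := by
    by_contra h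
    have := Nat.mul_le_mul_right b (not_lt.mp h)
    omega
  have hS := card_ann_mul_sum_fiber_not_isUnit_le π hπ c₀ hc₀
  have hG := hyperbolicRepCount_eq_card_mul_add c₀
  have hU := card_isUnit_or_add_sq (R := R)
  have ha : (a : ℚ) ≠ 0 := by exact_mod_cast Fintype.card_ne_zero
  have hle : (hyperbolicRepCount c : ℚ) ≤ hyperbolicRepCount c₀ := by exact_mod_cast hc₀ c
  qify at hκb hS hG hU hκ
  have key : ((κ : ℚ) - 1) * (a ^ 3 + a ^ 2 * b - hyperbolicRepCount c₀) =
      hyperbolicRepCount c₀ -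
        κ * ∑ x with ¬IsUnit x.1 ∧ ¬IsUnit x.2, (hyperbolicFiberCount x c₀ : ℚ) := by
    linear_combination (-(κ : ℚ)) * hG + (-(κ : ℚ) * a) * hU + ((a : ℚ) ^ 2 + a * b) * hκb
  have hmax : (hyperbolicRepCount c₀ : ℚ) ≤ a ^ 3 + a ^ 2 * b := by nlinarith
  calc (hyperbolicRepCount c : ℚ) ≤ a ^ 3 + a ^ 2 * b := hle.trans hmax
    _ = (1 + (b : ℚ) / a) * (a : ℚ) ^ 3 := by field_simp

end HyperbolicCount

section PrimePower

variable {p : ℕ} [hp : Fact p.Prime]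

theorem ZMod.not_isUnit_iff_natCast_dvd (k : ℕ) (x : ZMod (p ^ (k + 1))) :
    ¬IsUnit x ↔ (p : ZMod (p ^ (k + 1))) ∣ x := by
  constructor
  · intro hx
    rw [← ZMod.natCast_zmod_val x, ZMod.isUnit_natCast_iff_not_dvd_pow hp.out k.succ_pos,
      not_not] at hx
    obtain ⟨y, hy⟩ := hx
    exact ⟨y, by rw [← ZMod.natCast_zmod_val x, hy, Nat.cast_mul]⟩
  · rintro ⟨y, rfl⟩ hu
    exact ZMod.prime_natCast_not_isUnit_pow hp.out k.succ_pos (isUnit_of_mul_isUnit_left hu)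

theorem ZMod.card_filter_not_isUnit_prime_pow (k : ℕ) :
    #{x : ZMod (p ^ (k + 1)) | ¬IsUnit x} = p ^ k := by
  have hunits : #{x : ZMod (p ^ (k + 1)) | IsUnit x} = Fintype.card (ZMod (p ^ (k + 1)))ˣ := by
    rw [← card_univ, ← card_image_of_injective _ Units.val_injective]
    congr 1
    ext x
    simp only [mem_filter, mem_univ, true_and, mem_image]
    rfl
  have h := card_filter_add_card_filter_not (s := univ) fun x : ZMod (p ^ (k + 1)) => IsUnit x
  rw [hunits, ZMod.card_units_eq_totient, Nat.totient_prime_pow_succ hp.out, card_univ, ZMod.card,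
    Nat.mul_sub_one] at h
  have := Nat.le_mul_of_pos_right (p ^ k) hp.out.pos
  have := pow_succ p k
  omega

theorem hyperbolicRepCount_zmod_prime_pow_bounds (ν : ℕ) (c : ZMod (p ^ ν)) :
    (1 - ((p : ℚ) ^ 2)⁻¹) * (p : ℚ) ^ (3 * ν) ≤ hyperbolicRepCount c ∧
      (hyperbolicRepCount c : ℚ) ≤ (1 + (p : ℚ)⁻¹) * (p : ℚ) ^ (3 * ν) := by
  have hp0 : (0 : ℚ) < p := by exact_mod_cast hp.out.pos
  rcases ν with _ | k
  · have : Subsingleton (ZMod (p ^ 0)) := ZMod.subsingleton_iff.mpr (pow_zero p)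
    have hG : hyperbolicRepCount c = 1 := by
      rw [hyperbolicRepCount, filter_true_of_mem fun _ _ => Subsingleton.elim _ _, card_univ,
        Fintype.card_eq_one_iff]
      exact ⟨0, fun _ => Subsingleton.elim _ _⟩
    simp only [hG, mul_zero, pow_zero, mul_one, Nat.cast_one]
    constructor
    · simp only [sub_le_self_iff]
      positivity
    · simp only [le_add_iff_nonneg_right]
      positivity
  · have hba : (#{x : ZMod (p ^ (k + 1)) | ¬IsUnit x} : ℚ) / Fintype.card (ZMod (p ^ (k + 1))) =
        (p : ℚ)⁻¹ := by
      rw [ZMod.card_filter_not_isUnit_prime_pow, ZMod.card]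
      push_cast
      field_simp
      ring
    have ha : (Fintype.card (ZMod (p ^ (k + 1))) : ℚ) ^ 3 = (p : ℚ) ^ (3 * (k + 1)) := by
      rw [ZMod.card]
      push_cast
      ring
    constructor
    · simpa only [hba, ha, inv_pow] using one_sub_sq_mul_le_hyperbolicRepCount c
    · simpa only [hba, ha] using
        hyperbolicRepCount_le_one_add_mul _ (ZMod.not_isUnit_iff_natCast_dvd k) c

end PrimePower

theorem exists_intCast_eq_map_add_sub {M : Type*} [AddCommGroup M] (f : M → ℚ) {x μ : M} {m : ℚ}
    (hx : ∃ z : ℤ, f x = z) (hμx : ∃ z : ℤ, QuadraticMap.polar f μ x = z)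
    (hm : ∃ z : ℤ, m - f μ = z) : ∃ z : ℤ, f (x + μ) - m = z := by
  obtain ⟨z₁, h₁⟩ := hx
  obtain ⟨z₂, h₂⟩ := hμx
  obtain ⟨z₃, h₃⟩ := hm
  refine ⟨z₁ + z₂ - z₃, ?_⟩
  rw [QuadraticMap.map_add f x μ, QuadraticMap.polar_comm]
  push_cast
  linarith

theorem exists_intCast_eq_and_dvd_iff {q m : ℚ} {w : ℤ} (hw : q - m = w) (M x₁ y₁ x₂ y₂ : ℕ) :
    (∃ z : ℤ, q + (x₁ : ℚ) * y₁ + (x₂ : ℚ) * y₂ - m = z ∧ (M : ℤ) ∣ z) ↔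
      (x₁ : ZMod M) * y₁ + (x₂ : ZMod M) * y₂ = -w := by
  have hz : q + (x₁ : ℚ) * y₁ + (x₂ : ℚ) * y₂ - m = ((w + x₁ * y₁ + x₂ * y₂ : ℤ) : ℚ) := by
    push_cast
    linarith
  simp only [hz, Int.cast_inj, exists_eq_left', ← ZMod.intCast_zmod_eq_zero_iff_dvd,
    eq_neg_iff_add_eq_zero]
  push_cast
  rw [add_rotate]

theorem card_fin_filter_eq_hyperbolicRepCount (M : ℕ) [NeZero M] (c : ZMod M) :
    #{r : Fin M × Fin M × Fin M × Fin M |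
      ((r.1 : ℕ) : ZMod M) * (r.2.1 : ℕ) + ((r.2.2.1 : ℕ) : ZMod M) * (r.2.2.2 : ℕ) = c} =
      hyperbolicRepCount c := by
  let e : Fin M ≃ ZMod M :=
    ⟨fun i => (i : ℕ), fun x => ⟨x.val, x.val_lt⟩, fun i => Fin.ext (ZMod.val_cast_of_lt i.2),
      ZMod.natCast_zmod_val⟩
  refine card_nbij' (fun r => ((e r.1, e r.2.2.1), (e r.2.1, e r.2.2.2)))
    (fun z => (e.symm z.1.1, e.symm z.2.1, e.symm z.1.2, e.symm z.2.2)) ?_ ?_ ?_ ?_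
  all_goals
    intro r hr
    simp_all [e, Nat.mod_eq_of_lt]

/-- Representation number bounds for a lattice splitting off two hyperbolic planes:
if `Q₀` is an integral quadratic form on `ℤⁿ`, `μ₀` a dual vector and `m ≡ Q₀(μ₀) (mod ℤ)`,
then the number `N` of residues `(λ,x₁,y₁,x₂,y₂)` mod `p^ν` with
`Q₀(λ+μ₀) + x₁y₁ + x₂y₂ ≡ m (mod p^ν)` satisfies
`(1-p⁻²) p^{(n+3)ν} ≤ N ≤ (1+p⁻¹) p^{(n+3)ν}`. -/
theorem repNumber_splits_two_hyperbolic_planes_bounds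
    (n : ℕ) (Q₀ : QuadraticForm ℚ (Fin n → ℚ))
    (hQint : ∀ v : Fin n → ℤ, ∃ z : ℤ, Q₀ (fun i => (v i : ℚ)) = (z : ℚ))
    (μ₀ : Fin n → ℚ)
    (hμint : ∀ v : Fin n → ℤ, ∃ z : ℤ,
      QuadraticMap.polar Q₀ μ₀ (fun i => (v i : ℚ)) = (z : ℚ))
    (m : ℚ) (hm : ∃ z : ℤ, m - Q₀ μ₀ = (z : ℚ))
    (p : ℕ) (hp : p.Prime) (ν : ℕ) :
    (1 - ((p : ℚ) ^ 2)⁻¹) * (p : ℚ) ^ ((n + 3) * ν) ≤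
      (Nat.card {t : (Fin n → Fin (p ^ ν)) × Fin (p ^ ν) × Fin (p ^ ν) × Fin (p ^ ν) × Fin (p ^ ν) //
        ∃ z : ℤ, Q₀ (fun i => (t.1 i : ℚ) + μ₀ i)
            + (t.2.1 : ℚ) * (t.2.2.1 : ℚ) + (t.2.2.2.1 : ℚ) * (t.2.2.2.2 : ℚ) - m = (z : ℚ)
          ∧ (p : ℤ) ^ ν ∣ z} : ℚ) ∧
    (Nat.card {t : (Fin n → Fin (p ^ ν)) × Fin (p ^ ν) × Fin (p ^ ν) × Fin (p ^ ν) × Fin (p ^ ν) //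
        ∃ z : ℤ, Q₀ (fun i => (t.1 i : ℚ) + μ₀ i)
            + (t.2.1 : ℚ) * (t.2.2.1 : ℚ) + (t.2.2.2.1 : ℚ) * (t.2.2.2.2 : ℚ) - m = (z : ℚ)
          ∧ (p : ℤ) ^ ν ∣ z} : ℚ)
      ≤ (1 + (p : ℚ)⁻¹) * (p : ℚ) ^ ((n + 3) * ν) := by
  classical
  have : Fact p.Prime := ⟨hp⟩
  have hint (l : Fin n → Fin (p ^ ν)) : ∃ z : ℤ, Q₀ (fun i => (l i : ℚ) + μ₀ i) - m = z :=
    exists_intCast_eq_map_add_sub Q₀ (by simpa using hQint fun i => (l i : ℤ))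
      (by simpa using hμint fun i => (l i : ℤ)) hm
  choose w hw using hint
  have hfiber l := exists_intCast_eq_and_dvd_iff (hw l) (p ^ ν)
  rw [Nat.card_eq_fintype_card, Fintype.card_subtype, card_filter, Fintype.sum_prod_type]
  simp only [Nat.cast_pow] at hfiber
  simp only [hfiber, ← card_filter, card_fin_filter_eq_hyperbolicRepCount, Nat.cast_sum]
  have hbounds l := hyperbolicRepCount_zmod_prime_pow_bounds ν (-(w l) : ZMod (p ^ ν))
  set N := #(univ : Finset (Fin n → Fin (p ^ ν)))
  have hcard : (N : ℚ) * (p : ℚ) ^ (3 * ν) = (p : ℚ) ^ ((n + 3) * ν) := by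
    simp only [N, card_univ, Fintype.card_fun, Fintype.card_fin]
    push_cast
    ring
  constructor
  · calc _ = N • ((1 - ((p : ℚ) ^ 2)⁻¹) * (p : ℚ) ^ (3 * ν)) := by
          rw [nsmul_eq_mul, ← hcard]
          ring
      _ ≤ _ := card_nsmul_le_sum _ _ _ fun l _ => (hbounds l).1
  · calc _ ≤ N • ((1 + (p : ℚ)⁻¹) * (p : ℚ) ^ (3 * ν)) :=
          sum_le_card_nsmul _ _ _ fun l _ => (hbounds l).2
      _ = _ := by
          rw [nsmul_eq_mul, ← hcard]
          ring
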